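/- arXiv:2011.11657 — 2 statements merged into one kernel-verified Lean document; each statement's English description precedes it below -/
import Mathlib

section
/- Let L be a finite lattice and let M be a maximal chain of L. Then M is a chief chain if and only if no pentagon sublattice of L has an element of M as its short side, nor any cover relation of M as its long side. Equivalently: M is a chief chain if and only if (a) for every m ∈ M there is no pair x < y in L with m incomparable to x and y, m ∧ x = m ∧ y, and m ∨ x = m ∨ y; and (b) for every cover pair m ⋖ m' in M there is no z ∈ L incomparable to both m and m' with z ∧ m = z ∧ m' and z ∨ m = z ∨ m'. -/
/-- An element `m` of a lattice is *left-modular* if for all `y` and all `x < y`,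
`x ⊔ (m ⊓ y) = (x ⊔ m) ⊓ y`. -/
def IsLeftModular {L : Type*} [Lattice L] (m : L) : Prop :=
  ∀ x y : L, x < y → x ⊔ (m ⊓ y) = (x ⊔ m) ⊓ y

/-- A chain `M` in a lattice is *right chain-modular* if for all `x, y ∈ M` with `x < y`
and all `z`, `x ⊔ (z ⊓ y) = (x ⊔ z) ⊓ y`. -/
def IsRightChainModular {L : Type*} [Lattice L] (M : Set L) : Prop :=
  ∀ x ∈ M, ∀ y ∈ M, x < y → ∀ z : L, x ⊔ (z ⊓ y) = (x ⊔ z) ⊓ y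

/-- A chain is *chain-modular* if it is right chain-modular and all its elements are
left-modular. -/
def IsChainModular {L : Type*} [Lattice L] (M : Set L) : Prop :=
  IsRightChainModular M ∧ ∀ m ∈ M, IsLeftModular m

/-- A (maximal) chain `M` is a *chief chain* if for every chain `C`, the sublattice
generated by `M ∪ C` is distributive. -/
def IsChiefChain {L : Type*} [Lattice L] (M : Set L) : Prop :=
  ∀ C : Set L, IsChain (· ≤ ·) C →
    ∀ a ∈ latticeClosure (M ∪ C), ∀ b ∈ latticeClosure (M ∪ C),
      ∀ c ∈ latticeClosure (M ∪ C), a ⊓ (b ⊔ c) = (a ⊓ b) ⊔ (a ⊓ c)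

namespace ChiefAux

variable {L : Type*} [Lattice L]

/-- distributivity over a join of two comparable elements -/
lemma inf_sup_cmp (a b d : L) (h : b ≤ d ∨ d ≤ b) :
    a ⊓ (b ⊔ d) = (a ⊓ b) ⊔ (a ⊓ d) := by
  rcases h with h | h
  · rw [sup_eq_right.2 h, sup_eq_right.2 (inf_le_inf_left a h)]
  · rw [sup_eq_left.2 h, sup_eq_left.2 (inf_le_inf_left a h)]

lemma sup_inf_cmp (a b d : L) (h : b ≤ d ∨ d ≤ b) :
    a ⊔ (b ⊓ d) = (a ⊔ b) ⊓ (a ⊔ d) := by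
  rcases h with h | h
  · rw [inf_eq_left.2 h, inf_eq_left.2 (sup_le_sup_left h a)]
  · rw [inf_eq_right.2 h, inf_eq_right.2 (sup_le_sup_left h a)]

lemma lm_le {m : L} (h : IsLeftModular m) {x y : L} (hxy : x ≤ y) :
    x ⊔ (m ⊓ y) = (x ⊔ m) ⊓ y := by
  rcases lt_or_eq_of_le hxy with h' | rfl
  · exact h x y h'
  · rw [sup_eq_left.2 inf_le_right, inf_eq_right.2 le_sup_left]

lemma rm_le {M : Set L} (h : IsRightChainModular M) {x y : L} (hx : x ∈ M) (hy : y ∈ M)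
    (hxy : x ≤ y) (z : L) : x ⊔ (z ⊓ y) = (x ⊔ z) ⊓ y := by
  rcases lt_or_eq_of_le hxy with h' | rfl
  · exact h x hx y hy h' z
  · rw [sup_eq_left.2 inf_le_right, inf_eq_right.2 le_sup_left]

/-- join normal form: `⋁ (cᵢ ⊓ tᵢ) ⊔ m` -/
def phi2 : List L → List L → L → L
  | c :: cs, t :: ts, m => (c ⊓ t) ⊔ phi2 cs ts m
  | _, _, m => m

/-- meet normal form with accumulator: `(c ⊔ t₁) ⊓ (c₁ ⊔ t₂) ⊓ ... ⊓ (c_N ⊔ m)` -/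
def psi2 : L → List L → List L → L → L
  | c, c' :: cs, t :: ts, m => (c ⊔ t) ⊓ psi2 c' cs ts m
  | c, _, _, m => c ⊔ m

lemma le_psi2 : ∀ (cs ts : List L) (c m : L), List.Chain' (· ≤ ·) (c :: cs) →
    c ≤ psi2 c cs ts m
  | [], _, c, m, _ => by simp [psi2]
  | _ :: _, [], c, m, _ => by simp [psi2]
  | c' :: cs, t :: ts, c, m, h => by
    have h1 : c ≤ c' := (List.isChain_cons_cons.1 h).1
    have h2 := le_psi2 cs ts c' m (List.isChain_cons_cons.1 h).2
    exact le_inf le_sup_left (h1.trans h2)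

theorem phi2_eq_psi2 {M : Set L} (hRM : IsRightChainModular M)
    (hLM : ∀ m ∈ M, IsLeftModular m) (bot : L) (hbot : ∀ x : L, bot ≤ x) :
    ∀ (cs ts : List L) (m : L), List.Chain' (· ≤ ·) cs →
      List.Chain' (· ≥ ·) (ts ++ [m]) → (∀ t ∈ ts, t ∈ M) → m ∈ M →
      ts.length = cs.length → phi2 cs ts m = psi2 bot cs ts m
  | [], [], m, _, _, _, _, _ => by
    simp [phi2, psi2, sup_eq_right.2 (hbot m)]
  | [c₁], [t₁], m, _, hdesc, hts, hm, _ => by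
    have hmt : m ≤ t₁ := by
      simpa using (List.isChain_cons_cons.1 hdesc).1
    have := rm_le hRM hm (hts t₁ (by simp)) hmt c₁
    simp only [phi2, psi2]
    rw [sup_eq_right.2 (hbot t₁), sup_comm ((c₁ : L) ⊓ t₁) m, this, inf_comm, sup_comm]
  | c₁ :: c₂ :: cs, t₁ :: t₂ :: ts, m, hasc, hdesc, hts, hm, hlen => by
    have hasc' : List.Chain' (· ≤ ·) (c₂ :: cs) := (List.isChain_cons_cons.1 hasc).2
    have hdesc' : List.Chain' (· ≥ ·) ((t₂ :: ts) ++ [m]) := (List.isChain_cons_cons.1 hdesc).2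
    have hts' : ∀ t ∈ t₂ :: ts, t ∈ M := fun t ht => hts t (List.mem_cons_of_mem _ ht)
    have hlen' : (t₂ :: ts).length = (c₂ :: cs).length := by simpa using hlen
    have IH := phi2_eq_psi2 hRM hLM bot hbot (c₂ :: cs) (t₂ :: ts) m hasc' hdesc' hts' hm hlen'
    have ht₁ : t₁ ∈ M := hts t₁ (by simp)
    have ht₂ : t₂ ∈ M := hts t₂ (by simp)
    have ht21 : t₂ ≤ t₁ := (List.isChain_cons_cons.1 hdesc).1
    set R := psi2 c₂ cs ts m with hR
    have hc12 : c₁ ≤ c₂ := (List.isChain_cons_cons.1 hasc).1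
    have hcR : c₂ ≤ R := le_psi2 cs ts c₂ m hasc'
    have hxR : c₁ ⊓ t₁ ≤ R := le_trans (le_trans inf_le_left hc12) hcR
    have step1 : psi2 bot (c₂ :: cs) (t₂ :: ts) m = t₂ ⊓ R := by
      simp only [psi2, ← hR]; rw [sup_eq_right.2 (hbot t₂)]
    have lm := lm_le (hLM t₂ ht₂) hxR
    have rm := rm_le hRM ht₂ ht₁ ht21 c₁
    calc phi2 (c₁ :: c₂ :: cs) (t₁ :: t₂ :: ts) m
        = (c₁ ⊓ t₁) ⊔ (t₂ ⊓ R) := by rw [phi2, IH, step1]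
      _ = ((c₁ ⊓ t₁) ⊔ t₂) ⊓ R := lm
      _ = ((t₂ ⊔ c₁) ⊓ t₁) ⊓ R := by rw [sup_comm, ← rm, sup_comm t₂ (c₁ ⊓ t₁)]
      _ = t₁ ⊓ ((c₁ ⊔ t₂) ⊓ R) := by rw [sup_comm t₂ c₁] ; rw [inf_comm ((c₁ : L) ⊔ t₂) t₁, inf_assoc]
      _ = psi2 bot (c₁ :: c₂ :: cs) (t₁ :: t₂ :: ts) m := by
          simp only [psi2, ← hR]; rw [sup_eq_right.2 (hbot t₁)]
  | c₁ :: c₂ :: cs, [t₁], m, _, _, _, _, hlen => by simp at hlen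
  | c₁ :: c₂ :: cs, [], m, _, _, _, _, hlen => by simp at hlen
  | [c₁], [], m, _, _, _, _, hlen => by simp at hlen
  | [c₁], t₁ :: t₂ :: ts, m, _, _, _, _, hlen => by simp at hlen
  | [], t :: ts, m, _, _, _, _, hlen => by simp at hlen

end ChiefAux

namespace ChiefAux
variable {L : Type*} [Lattice L]

lemma phi2_sup {M : Set L} (hMc : IsChain (· ≤ ·) M) :
    ∀ (cs ts ss : List L) (m m' : L), (∀ t ∈ ts, t ∈ M) → (∀ s ∈ ss, s ∈ M) →
      ts.length = cs.length → ss.length = cs.length →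
      phi2 cs ts m ⊔ phi2 cs ss m' = phi2 cs (List.zipWith (· ⊔ ·) ts ss) (m ⊔ m')
  | [], [], [], m, m', _, _, _, _ => by simp [phi2]
  | c :: cs, t :: ts, s :: ss, m, m', hts, hss, hl1, hl2 => by
    have ht : t ∈ M := hts t (by simp)
    have hs : s ∈ M := hss s (by simp)
    have hcmp : t ≤ s ∨ s ≤ t := by
      rcases eq_or_ne t s with rfl | hne
      · exact Or.inl le_rfl
      · exact hMc.total ht hs
    have IH := phi2_sup hMc cs ts ss m m' (fun x hx => hts x (by simp [hx]))
      (fun x hx => hss x (by simp [hx])) (by simpa using hl1) (by simpa using hl2)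
    simp only [phi2, List.zipWith_cons_cons]
    rw [sup_sup_sup_comm, IH, inf_sup_cmp c t s hcmp]
  | [], [], s :: ss, _, _, _, _, _, hl2 => by simp at hl2
  | [], t :: ts, _, _, _, _, _, hl1, _ => by simp at hl1
  | c :: cs, [], _, _, _, _, _, hl1, _ => by simp at hl1
  | c :: cs, t :: ts, [], _, _, _, _, _, hl2 => by simp at hl2

lemma psi2_inf {M : Set L} (hMc : IsChain (· ≤ ·) M) :
    ∀ (cs ts ss : List L) (c m m' : L), (∀ t ∈ ts, t ∈ M) → (∀ s ∈ ss, s ∈ M) →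
      m ∈ M → m' ∈ M → ts.length = cs.length → ss.length = cs.length →
      psi2 c cs ts m ⊓ psi2 c cs ss m' = psi2 c cs (List.zipWith (· ⊓ ·) ts ss) (m ⊓ m')
  | [], [], [], c, m, m', _, _, hm, hm', _, _ => by
    have hcmp : m ≤ m' ∨ m' ≤ m := by
      rcases eq_or_ne m m' with rfl | hne
      · exact Or.inl le_rfl
      · exact hMc.total hm hm'
    simp only [psi2, List.zipWith]
    exact (sup_inf_cmp c m m' hcmp).symm
  | c' :: cs, t :: ts, s :: ss, c, m, m', hts, hss, hm, hm', hl1, hl2 => by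
    have ht : t ∈ M := hts t (by simp)
    have hs : s ∈ M := hss s (by simp)
    have hcmp : t ≤ s ∨ s ≤ t := by
      rcases eq_or_ne t s with rfl | hne
      · exact Or.inl le_rfl
      · exact hMc.total ht hs
    have IH := psi2_inf hMc cs ts ss c' m m' (fun x hx => hts x (by simp [hx]))
      (fun x hx => hss x (by simp [hx])) hm hm' (by simpa using hl1) (by simpa using hl2)
    simp only [psi2, List.zipWith_cons_cons]
    rw [inf_inf_inf_comm, IH, sup_inf_cmp c t s hcmp]
  | [], [], s :: ss, _, _, _, _, _, _, _, _, hl2 => by simp at hl2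
  | [], t :: ts, _, _, _, _, _, _, _, _, hl1, _ => by simp at hl1
  | c' :: cs, [], _, _, _, _, _, _, _, _, hl1, _ => by simp at hl1
  | c' :: cs, t :: ts, [], _, _, _, _, _, _, _, _, hl2 => by simp at hl2

lemma mem_zipWith_inf {M : Set L} (hMc : IsChain (· ≤ ·) M) :
    ∀ (ts ss : List L), (∀ t ∈ ts, t ∈ M) → (∀ s ∈ ss, s ∈ M) →
      ∀ x ∈ List.zipWith (· ⊓ ·) ts ss, x ∈ M
  | t :: ts, s :: ss, hts, hss, x, hx => by
    simp only [List.zipWith_cons_cons, List.mem_cons] at hx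
    rcases hx with rfl | hx
    · have ht : t ∈ M := hts t (by simp)
      have hs : s ∈ M := hss s (by simp)
      rcases eq_or_ne t s with rfl | hne
      · simpa using ht
      · rcases hMc.total ht hs with h | h
        · rwa [inf_eq_left.2 h]
        · rwa [inf_eq_right.2 h]
    · exact mem_zipWith_inf hMc ts ss (fun y hy => hts y (by simp [hy]))
        (fun y hy => hss y (by simp [hy])) x hx
  | [], _, _, _, x, hx => by simp at hx
  | t :: ts, [], _, _, x, hx => by simp at hx

lemma mem_zipWith_sup {M : Set L} (hMc : IsChain (· ≤ ·) M) :
    ∀ (ts ss : List L), (∀ t ∈ ts, t ∈ M) → (∀ s ∈ ss, s ∈ M) →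
      ∀ x ∈ List.zipWith (· ⊔ ·) ts ss, x ∈ M
  | t :: ts, s :: ss, hts, hss, x, hx => by
    simp only [List.zipWith_cons_cons, List.mem_cons] at hx
    rcases hx with rfl | hx
    · have ht : t ∈ M := hts t (by simp)
      have hs : s ∈ M := hss s (by simp)
      rcases eq_or_ne t s with rfl | hne
      · simpa using ht
      · rcases hMc.total ht hs with h | h
        · rwa [sup_eq_right.2 h]
        · rwa [sup_eq_left.2 h]
    · exact mem_zipWith_sup hMc ts ss (fun y hy => hts y (by simp [hy]))
        (fun y hy => hss y (by simp [hy])) x hx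
  | [], _, _, _, x, hx => by simp at hx
  | t :: ts, [], _, _, x, hx => by simp at hx

lemma chain'_ge_zipWith_inf :
    ∀ (l l' : List L), List.Chain' (· ≥ ·) l → List.Chain' (· ≥ ·) l' →
      List.Chain' (· ≥ ·) (List.zipWith (· ⊓ ·) l l')
  | a :: b :: l, a' :: b' :: l', h, h' => by
    simp only [List.zipWith_cons_cons]
    simp only [List.Chain', List.isChain_cons_cons]
    refine ⟨inf_le_inf (List.isChain_cons_cons.1 h).1 (List.isChain_cons_cons.1 h').1, ?_⟩
    exact chain'_ge_zipWith_inf (b :: l) (b' :: l') (List.isChain_cons_cons.1 h).2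
      (List.isChain_cons_cons.1 h').2
  | [], l', _, _ => by simp [List.Chain']
  | a :: l, [], _, _ => by simp [List.Chain']
  | [a], b :: l', _, _ => by simp [List.zipWith, List.Chain']
  | a :: b :: l, [a'], _, _ => by simp [List.zipWith, List.Chain']

lemma chain'_ge_zipWith_sup :
    ∀ (l l' : List L), List.Chain' (· ≥ ·) l → List.Chain' (· ≥ ·) l' →
      List.Chain' (· ≥ ·) (List.zipWith (· ⊔ ·) l l')
  | a :: b :: l, a' :: b' :: l', h, h' => by
    simp only [List.zipWith_cons_cons]
    simp only [List.Chain', List.isChain_cons_cons]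
    refine ⟨sup_le_sup (List.isChain_cons_cons.1 h).1 (List.isChain_cons_cons.1 h').1, ?_⟩
    exact chain'_ge_zipWith_sup (b :: l) (b' :: l') (List.isChain_cons_cons.1 h).2
      (List.isChain_cons_cons.1 h').2
  | [], l', _, _ => by simp [List.Chain']
  | a :: l, [], _, _ => by simp [List.Chain']
  | [a], b :: l', _, _ => by simp [List.zipWith, List.Chain']
  | a :: b :: l, [a'], _, _ => by simp [List.zipWith, List.Chain']

lemma zipWith_append_singleton {f : L → L → L} :
    ∀ (ts ss : List L) (m m' : L), ts.length = ss.length →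
      List.zipWith f (ts ++ [m]) (ss ++ [m']) = List.zipWith f ts ss ++ [f m m']
  | [], [], m, m', _ => by simp
  | t :: ts, s :: ss, m, m', hl => by
    simp only [List.cons_append, List.zipWith_cons_cons]
    rw [zipWith_append_singleton ts ss m m' (by simpa using hl)]
  | [], s :: ss, _, _, hl => by simp at hl
  | t :: ts, [], _, _, hl => by simp at hl

end ChiefAux

namespace ChiefAux
variable {L : Type*} [Lattice L]

/-- `a` has a valid representation over the ascending list `cs`. -/
def ValidRep (M : Set L) (cs : List L) (a : L) : Prop :=
  ∃ ts m, ts.length = cs.length ∧ (∀ t ∈ ts, t ∈ M) ∧ m ∈ M ∧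
    List.Chain' (· ≥ ·) (ts ++ [m]) ∧ a = phi2 cs ts m

section Reps
variable {M : Set L} (hMc : IsChain (· ≤ ·) M)

include hMc in
lemma mem_inf_mem {m m' : L} (hm : m ∈ M) (hm' : m' ∈ M) : m ⊓ m' ∈ M := by
  rcases eq_or_ne m m' with rfl | hne
  · simpa using hm
  · rcases hMc.total hm hm' with h | h
    · rwa [inf_eq_left.2 h]
    · rwa [inf_eq_right.2 h]

include hMc in
lemma mem_sup_mem {m m' : L} (hm : m ∈ M) (hm' : m' ∈ M) : m ⊔ m' ∈ M := by
  rcases eq_or_ne m m' with rfl | hne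
  · simpa using hm
  · rcases hMc.total hm hm' with h | h
    · rwa [sup_eq_right.2 h]
    · rwa [sup_eq_left.2 h]

variable (hRM : IsRightChainModular M) (hLM : ∀ m ∈ M, IsLeftModular m)
  {bot : L} (hbot : ∀ x : L, bot ≤ x)
  {cs : List L} (hasc : List.Chain' (· ≤ ·) cs)

include hMc in
lemma validRep_sup {a b : L} (ha : ValidRep M cs a) (hb : ValidRep M cs b) :
    ∃ ts m, ts.length = cs.length ∧ (∀ t ∈ ts, t ∈ M) ∧ m ∈ M ∧
      List.Chain' (· ≥ ·) (ts ++ [m]) ∧ a ⊔ b = phi2 cs ts m := by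
  obtain ⟨ts, m, hl1, hts, hm, hd1, rfl⟩ := ha
  obtain ⟨ss, m', hl2, hss, hm', hd2, rfl⟩ := hb
  refine ⟨List.zipWith (· ⊔ ·) ts ss, m ⊔ m', ?_, mem_zipWith_sup hMc ts ss hts hss,
    mem_sup_mem hMc hm hm', ?_, (phi2_sup hMc cs ts ss m m' hts hss hl1 hl2)⟩
  · rw [List.length_zipWith, hl1, hl2, min_self]
  · have := chain'_ge_zipWith_sup (ts ++ [m]) (ss ++ [m']) hd1 hd2
    rwa [zipWith_append_singleton ts ss m m' (hl1.trans hl2.symm)] at this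

include hMc hRM hLM hbot hasc in
lemma phi2_inf_eq {ts ss : List L} {m m' : L}
    (hl1 : ts.length = cs.length) (hl2 : ss.length = cs.length)
    (hts : ∀ t ∈ ts, t ∈ M) (hss : ∀ s ∈ ss, s ∈ M) (hm : m ∈ M) (hm' : m' ∈ M)
    (hd1 : List.Chain' (· ≥ ·) (ts ++ [m])) (hd2 : List.Chain' (· ≥ ·) (ss ++ [m'])) :
    phi2 cs ts m ⊓ phi2 cs ss m' = phi2 cs (List.zipWith (· ⊓ ·) ts ss) (m ⊓ m') := by
  have hl3 : (List.zipWith (· ⊓ ·) ts ss).length = cs.length := by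
    rw [List.length_zipWith, hl1, hl2, min_self]
  have hd3 : List.Chain' (· ≥ ·) (List.zipWith (· ⊓ ·) ts ss ++ [m ⊓ m']) := by
    have := chain'_ge_zipWith_inf (ts ++ [m]) (ss ++ [m']) hd1 hd2
    rwa [zipWith_append_singleton ts ss m m' (hl1.trans hl2.symm)] at this
  rw [phi2_eq_psi2 hRM hLM bot hbot cs ts m hasc hd1 hts hm hl1,
    phi2_eq_psi2 hRM hLM bot hbot cs ss m' hasc hd2 hss hm' hl2,
    psi2_inf hMc cs ts ss bot m m' hts hss hm hm' hl1 hl2,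
    ← phi2_eq_psi2 hRM hLM bot hbot cs _ _ hasc hd3
      (mem_zipWith_inf hMc ts ss hts hss) (mem_inf_mem hMc hm hm') hl3]

include hMc hRM hLM hbot hasc in
lemma validRep_inf {a b : L} (ha : ValidRep M cs a) (hb : ValidRep M cs b) :
    ∃ ts m, ts.length = cs.length ∧ (∀ t ∈ ts, t ∈ M) ∧ m ∈ M ∧
      List.Chain' (· ≥ ·) (ts ++ [m]) ∧ a ⊓ b = phi2 cs ts m := by
  obtain ⟨ts, m, hl1, hts, hm, hd1, rfl⟩ := ha
  obtain ⟨ss, m', hl2, hss, hm', hd2, rfl⟩ := hb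
  refine ⟨List.zipWith (· ⊓ ·) ts ss, m ⊓ m', ?_, mem_zipWith_inf hMc ts ss hts hss,
    mem_inf_mem hMc hm hm', ?_, phi2_inf_eq hMc hRM hLM hbot hasc hl1 hl2 hts hss hm hm' hd1 hd2⟩
  · rw [List.length_zipWith, hl1, hl2, min_self]
  · have := chain'_ge_zipWith_inf (ts ++ [m]) (ss ++ [m']) hd1 hd2
    rwa [zipWith_append_singleton ts ss m m' (hl1.trans hl2.symm)] at this

include hMc in
lemma zip_distrib :
    ∀ (ta tb td : List L), (∀ t ∈ tb, t ∈ M) → (∀ t ∈ td, t ∈ M) →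
      List.zipWith (· ⊓ ·) ta (List.zipWith (· ⊔ ·) tb td) =
        List.zipWith (· ⊔ ·) (List.zipWith (· ⊓ ·) ta tb) (List.zipWith (· ⊓ ·) ta td)
  | a :: ta, b :: tb, d :: td, htb, htd => by
    simp only [List.zipWith_cons_cons]
    have hb : b ∈ M := htb b (by simp)
    have hd : d ∈ M := htd d (by simp)
    have hcmp : b ≤ d ∨ d ≤ b := by
      rcases eq_or_ne b d with rfl | hne
      · exact Or.inl le_rfl
      · exact hMc.total hb hd
    rw [inf_sup_cmp a b d hcmp,
      zip_distrib ta tb td (fun y hy => htb y (by simp [hy])) (fun y hy => htd y (by simp [hy]))]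
  | [], _, _, _, _ => by simp
  | a :: ta, [], _, _, _ => by simp
  | a :: ta, b :: tb, [], _, _ => by simp

include hMc hRM hLM hbot hasc in
lemma validRep_distrib {a b d : L} (ha : ValidRep M cs a) (hb : ValidRep M cs b)
    (hd : ValidRep M cs d) : a ⊓ (b ⊔ d) = (a ⊓ b) ⊔ (a ⊓ d) := by
  obtain ⟨ta, ma, hla, hta, hma, hda, rfl⟩ := ha
  obtain ⟨tb, mb, hlb, htb, hmb, hdb, rfl⟩ := hb
  obtain ⟨td, md, hld, htd, hmd, hdd, rfl⟩ := hd
  -- lengths of combinations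
  have hlbd : (List.zipWith (· ⊔ ·) tb td).length = cs.length := by
    rw [List.length_zipWith, hlb, hld, min_self]
  have hlab : (List.zipWith (· ⊓ ·) ta tb).length = cs.length := by
    rw [List.length_zipWith, hla, hlb, min_self]
  have hlad : (List.zipWith (· ⊓ ·) ta td).length = cs.length := by
    rw [List.length_zipWith, hla, hld, min_self]
  have hdbd : List.Chain' (· ≥ ·) (List.zipWith (· ⊔ ·) tb td ++ [mb ⊔ md]) := by
    have := chain'_ge_zipWith_sup (tb ++ [mb]) (td ++ [md]) hdb hdd
    rwa [zipWith_append_singleton tb td mb md (hlb.trans hld.symm)] at this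
  calc phi2 cs ta ma ⊓ (phi2 cs tb mb ⊔ phi2 cs td md)
      = phi2 cs ta ma ⊓ phi2 cs (List.zipWith (· ⊔ ·) tb td) (mb ⊔ md) := by
        rw [phi2_sup hMc cs tb td mb md htb htd hlb hld]
    _ = phi2 cs (List.zipWith (· ⊓ ·) ta (List.zipWith (· ⊔ ·) tb td)) (ma ⊓ (mb ⊔ md)) :=
        phi2_inf_eq hMc hRM hLM hbot hasc hla hlbd hta
          (mem_zipWith_sup hMc tb td htb htd) hma (mem_sup_mem hMc hmb hmd) hda hdbd
    _ = phi2 cs (List.zipWith (· ⊔ ·) (List.zipWith (· ⊓ ·) ta tb) (List.zipWith (· ⊓ ·) ta td))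
          ((ma ⊓ mb) ⊔ (ma ⊓ md)) := by
        rw [zip_distrib hMc ta tb td htb htd]
        congr 1
        refine inf_sup_cmp ma mb md ?_
        rcases eq_or_ne mb md with rfl | hne
        · exact Or.inl le_rfl
        · exact hMc.total hmb hmd
    _ = phi2 cs (List.zipWith (· ⊓ ·) ta tb) (ma ⊓ mb) ⊔
          phi2 cs (List.zipWith (· ⊓ ·) ta td) (ma ⊓ md) := by
        rw [phi2_sup hMc cs _ _ _ _ (mem_zipWith_inf hMc ta tb hta htb)
          (mem_zipWith_inf hMc ta td hta htd) hlab hlad]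
    _ = phi2 cs ta ma ⊓ phi2 cs tb mb ⊔ phi2 cs ta ma ⊓ phi2 cs td md := by
        rw [phi2_inf_eq hMc hRM hLM hbot hasc hla hlb hta htb hma hmb hda hdb,
          phi2_inf_eq hMc hRM hLM hbot hasc hla hld hta htd hma hmd hda hdd]

end Reps
end ChiefAux

namespace ChiefAux
variable {L : Type*} [Lattice L]

lemma chain'_ge_of_all_eq (m : L) : ∀ l : List L, (∀ x ∈ l, x = m) → List.Chain' (· ≥ ·) l
  | [], _ => List.isChain_nil
  | a :: l, h => by
    simp only [List.Chain', List.isChain_cons]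
    refine ⟨fun y hy => ?_, chain'_ge_of_all_eq m l fun x hx => h x (by simp [hx])⟩
    rw [h a (by simp), h y (by simp [List.mem_of_mem_head? hy])]

lemma phi2_const (m : L) : ∀ cs : List L, phi2 cs (List.replicate cs.length m) m = m
  | [] => rfl
  | c :: cs => by
    rw [List.length_cons, List.replicate_succ]
    show (c ⊓ m) ⊔ phi2 cs (List.replicate cs.length m) m = m
    rw [phi2_const m cs, sup_eq_right.2 inf_le_right]

lemma validRep_of_mem_M {M : Set L} {cs : List L} {m : L} (hm : m ∈ M) :
    ValidRep M cs m :=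
  ⟨List.replicate cs.length m, m, by simp, fun t ht => by rwa [List.eq_of_mem_replicate ht],
    hm, chain'_ge_of_all_eq m _ (fun x hx => by
      rcases List.mem_append.1 hx with h | h
      · exact List.eq_of_mem_replicate h
      · simpa using h), (phi2_const m cs).symm⟩

lemma phi2_bot {bot : L} (hbot : ∀ x : L, bot ≤ x) :
    ∀ cs : List L, phi2 cs (List.replicate cs.length bot) bot = bot
  | [] => rfl
  | c :: cs => by
    rw [List.length_cons, List.replicate_succ]
    show (c ⊓ bot) ⊔ phi2 cs (List.replicate cs.length bot) bot = bot
    rw [phi2_bot hbot cs, inf_eq_right.2 (hbot c), sup_idem]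

lemma validRep_of_mem_cs {M : Set L} {bot top : L} (hbotM : bot ∈ M) (htopM : top ∈ M)
    (hbot : ∀ x : L, bot ≤ x) (htop : ∀ x : L, x ≤ top) :
    ∀ cs : List L, List.Chain' (· ≤ ·) cs → ∀ c ∈ cs, ValidRep M cs c
  | c₁ :: cs, hasc, c, hc => by
    rcases List.mem_cons.1 hc with rfl | hc
    · refine ⟨top :: List.replicate cs.length bot, bot, by simp, ?_, hbotM, ?_, ?_⟩
      · intro t ht
        rcases List.mem_cons.1 ht with rfl | ht
        · exact htopM
        · rwa [List.eq_of_mem_replicate ht]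
      · simp only [List.cons_append, List.Chain', List.isChain_cons]
        refine ⟨fun y _ => htop y, chain'_ge_of_all_eq bot _ (fun x hx => by
          rcases List.mem_append.1 hx with h | h
          · exact List.eq_of_mem_replicate h
          · simpa using h)⟩
      · show c = (c ⊓ top) ⊔ phi2 cs (List.replicate cs.length bot) bot
        rw [phi2_bot hbot cs, inf_eq_left.2 (htop c), sup_eq_left.2 (hbot c)]
    · obtain ⟨ts, m, hl, hts, hm, hd, hrep⟩ :=
        validRep_of_mem_cs hbotM htopM hbot htop cs (List.isChain_cons.1 hasc).2 c hc
      refine ⟨top :: ts, m, by simpa using hl, ?_, hm, ?_, ?_⟩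
      · intro t ht
        rcases List.mem_cons.1 ht with rfl | ht
        · exact htopM
        · exact hts t ht
      · simp only [List.cons_append, List.Chain', List.isChain_cons]
        exact ⟨fun y _ => htop y, hd⟩
      · have hc₁c : c₁ ≤ c := by
          have := List.isChain_iff_pairwise.1 hasc
          exact (List.pairwise_cons.1 this).1 c hc
        show c = (c₁ ⊓ top) ⊔ phi2 cs ts m
        rw [← hrep, inf_eq_left.2 (htop c₁), sup_eq_right.2 hc₁c]

lemma exists_ascending_list (s : Finset L) (hs : ∀ a ∈ s, ∀ b ∈ s, a ≤ b ∨ b ≤ a) :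
    ∃ l : List L, List.Chain' (· ≤ ·) l ∧ ∀ x, x ∈ s ↔ x ∈ l := by
  classical
  induction s using Finset.strongInduction with
  | _ s ih =>
    rcases s.eq_empty_or_nonempty with rfl | hne
    · exact ⟨[], List.isChain_nil, by simp⟩
    · obtain ⟨a, ha, hamax⟩ := Set.Finite.exists_maximalFor id (↑s : Set L)
        s.finite_toSet (by exact_mod_cast hne)
      have hmax : ∀ b ∈ s, b ≤ a := by
        intro b hb
        rcases hs b hb a ha with h | h
        · exact h
        · exact hamax hb h
      obtain ⟨l, hl, hmem⟩ := ih (s.erase a) (Finset.erase_ssubset ha)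
        (fun x hx y hy => hs x (Finset.mem_of_mem_erase hx) y (Finset.mem_of_mem_erase hy))
      refine ⟨l ++ [a], ?_, ?_⟩
      · simp only [List.Chain', List.isChain_append]
        refine ⟨hl, List.isChain_singleton a, fun x hx y hy => ?_⟩
        simp only [List.head?_cons, Option.mem_some_iff] at hy
        subst hy
        exact hmax x (Finset.mem_of_mem_erase ((hmem x).2 (List.mem_of_mem_getLast? hx)))
      · intro x
        rw [List.mem_append, ← hmem x, Finset.mem_erase, List.mem_singleton]
        constructor
        · intro hx
          rcases eq_or_ne x a with rfl | hne'
          · exact Or.inr rfl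
          · exact Or.inl ⟨hne', hx⟩
        · rintro (⟨_, hx⟩ | rfl)
          · exact hx
          · exact ha

end ChiefAux

namespace ChiefAux
variable {L : Type*} [Lattice L]

lemma leftModular_of_condA {M : Set L}
    (hA : ∀ m ∈ M, ¬ ∃ x y : L, x < y ∧ (¬ m ≤ x ∧ ¬ x ≤ m) ∧ (¬ m ≤ y ∧ ¬ y ≤ m) ∧
        m ⊓ x = m ⊓ y ∧ m ⊔ x = m ⊔ y) :
    ∀ m ∈ M, IsLeftModular m := by
  intro m hm x y hxy
  set u := x ⊔ (m ⊓ y) with hu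
  set v := (x ⊔ m) ⊓ y with hv
  have hxv : x ≤ v := le_inf le_sup_left hxy.le
  have huy : u ≤ y := sup_le hxy.le inf_le_right
  have huv : u ≤ v := sup_le hxv (le_inf (inf_le_left.trans le_sup_right) inf_le_right)
  by_contra hne
  have huv' : u < v := lt_of_le_of_ne huv hne
  refine hA m hm ⟨u, v, huv', ⟨?_, ?_⟩, ⟨?_, ?_⟩, ?_, ?_⟩
  · intro h
    have hmy : m ≤ y := h.trans huy
    have h1 : u = x ⊔ m := by rw [hu, inf_eq_left.2 hmy]
    exact hne (le_antisymm huv (h1 ▸ inf_le_left))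
  · intro h
    have hxm : x ≤ m := le_sup_left.trans h
    have h1 : v ≤ u := by
      rw [hv, sup_eq_right.2 hxm]
      exact le_sup_right
    exact hne (le_antisymm huv h1)
  · intro h
    have hmy : m ≤ y := h.trans inf_le_right
    have h1 : u = x ⊔ m := by rw [hu, inf_eq_left.2 hmy]
    exact hne (le_antisymm huv (h1 ▸ inf_le_left))
  · intro h
    have h1 : v ≤ u := le_trans (le_inf h inf_le_right) le_sup_right
    exact hne (le_antisymm huv h1)
  · refine le_antisymm (inf_le_inf_left m huv) ?_
    exact le_inf inf_le_left ((inf_le_inf_left m inf_le_right).trans le_sup_right)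
  · refine le_antisymm (sup_le_sup_left huv m) ?_
    have h1 : m ⊔ u = x ⊔ m := by
      rw [hu, ← sup_assoc, sup_comm m x, sup_eq_left.2 ((inf_le_left).trans le_sup_right : m ⊓ y ≤ x ⊔ m)]
    rw [h1]
    exact sup_le le_sup_right inf_le_left

variable [Fintype L] {M : Set L}

lemma exists_cover_in_M (hM : IsMaxChain (· ≤ ·) M) {x y : L} (hx : x ∈ M) (hy : y ∈ M)
    (hxy : x < y) : ∃ m ∈ M, x ⋖ m ∧ m ≤ y := by
  set S : Set L := {t | t ∈ M ∧ x < t ∧ t ≤ y} with hS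
  obtain ⟨m, hmS, hmmin⟩ := Set.Finite.exists_minimalFor id S (Set.toFinite S)
    ⟨y, hy, hxy, le_rfl⟩
  obtain ⟨hmM, hxm, hmy⟩ := hmS
  refine ⟨m, hmM, ⟨hxm, fun w hxw hwm => ?_⟩, hmy⟩
  have hch : IsChain (· ≤ ·) (insert w M) := by
    refine hM.1.insert fun t ht hne => ?_
    rcases eq_or_ne t x with rfl | htx
    · exact Or.inr hxw.le
    · rcases hM.1.total ht hx with h | h
      · exact Or.inr (h.trans hxw.le)
      · have hxt : x < t := lt_of_le_of_ne h (Ne.symm htx)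
        rcases eq_or_ne t m with rfl | htm
        · exact Or.inl hwm.le
        · rcases hM.1.total ht hmM with h2 | h2
          · exact absurd (le_antisymm h2 (hmmin ⟨ht, hxt, h2.trans hmy⟩ h2)) htm
          · exact Or.inl (hwm.le.trans h2)
  have hwM : w ∈ M := by
    have := hM.2 hch (Set.subset_insert w M)
    rw [this]
    exact Set.mem_insert w M
  exact absurd (hmmin ⟨hwM, hxw, hwm.le.trans hmy⟩ hwm.le) hwm.not_ge

lemma rm_cover
    (hB : ∀ m ∈ M, ∀ m' ∈ M, m ⋖ m' → ¬ ∃ z : L, (¬ z ≤ m ∧ ¬ m ≤ z) ∧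
        (¬ z ≤ m' ∧ ¬ m' ≤ z) ∧ z ⊓ m = z ⊓ m' ∧ z ⊔ m = z ⊔ m')
    {x y : L} (hx : x ∈ M) (hy : y ∈ M) (hcov : x ⋖ y) (z : L) :
    x ⊔ (z ⊓ y) = (x ⊔ z) ⊓ y := by
  set u := x ⊔ (z ⊓ y) with hu
  set v := (x ⊔ z) ⊓ y with hv
  have hxy : x < y := hcov.lt
  have hxu : x ≤ u := le_sup_left
  have huy : u ≤ y := sup_le hxy.le inf_le_right
  have hxv : x ≤ v := le_inf le_sup_left hxy.le
  have hvy : v ≤ y := inf_le_right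
  have huv : u ≤ v := sup_le hxv (le_inf (inf_le_left.trans le_sup_right) inf_le_right)
  rcases hcov.eq_or_eq hxu huy with hux | huy'
  · rcases hcov.eq_or_eq hxv hvy with hvx | hvy'
    · rw [hux, hvx]
    · exfalso
      have h1 : z ⊓ y ≤ x := hux ▸ le_sup_right
      have h2 : y ≤ x ⊔ z := hvy' ▸ inf_le_left
      have notzx : ¬ z ≤ x := fun h =>
        absurd (h2.trans (sup_le le_rfl h)) hxy.not_ge
      have notxz : ¬ x ≤ z := fun h => by
        have hyz : y ≤ z := h2.trans (sup_le h le_rfl)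
        exact absurd ((le_inf le_rfl hyz).trans (inf_comm y z ▸ h1)) hxy.not_ge
      refine hB x hx y hy hcov ⟨z, ⟨notzx, notxz⟩, ⟨?_, ?_⟩, ?_, ?_⟩
      · intro h
        exact notzx ((inf_eq_left.2 h ▸ h1 : z ≤ x))
      · intro h
        exact notxz (hxy.le.trans h)
      · exact le_antisymm (inf_le_inf_left z hxy.le) (le_inf inf_le_left h1)
          |>.symm ▸ (le_antisymm (le_inf inf_le_left h1) (inf_le_inf_left z hxy.le)).symm
      · exact le_antisymm (sup_le_sup_left hxy.le z)
          (sup_le le_sup_left (h2.trans (sup_comm x z ▸ le_rfl))) |>.symm ▸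
          (le_antisymm (sup_le le_sup_left (h2.trans (sup_comm x z ▸ le_rfl)))
            (sup_le_sup_left hxy.le z)).symm
  · have hvy2 : v = y := le_antisymm hvy (huy' ▸ huv)
    rw [huy', hvy2]

lemma rm_of_conds (hM : IsMaxChain (· ≤ ·) M)
    (hB : ∀ m ∈ M, ∀ m' ∈ M, m ⋖ m' → ¬ ∃ z : L, (¬ z ≤ m ∧ ¬ m ≤ z) ∧
        (¬ z ≤ m' ∧ ¬ m' ≤ z) ∧ z ⊓ m = z ⊓ m' ∧ z ⊔ m = z ⊔ m')
    (hLM : ∀ m ∈ M, IsLeftModular m) : IsRightChainModular M := by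
  classical
  suffices H : ∀ n : ℕ, ∀ x y : L, x ∈ M → y ∈ M → x < y →
      (Finset.univ.filter (fun t : L => x < t ∧ t ≤ y)).card ≤ n →
      ∀ z : L, x ⊔ (z ⊓ y) = (x ⊔ z) ⊓ y by
    intro x hx y hy hxy z
    exact H _ x y hx hy hxy le_rfl z
  intro n
  induction n with
  | zero =>
    intro x y hx hy hxy hcard z
    exfalso
    have : y ∈ Finset.univ.filter (fun t : L => x < t ∧ t ≤ y) := by
      simp [hxy]
    have := Finset.card_pos.2 ⟨y, this⟩
    omega
  | succ n IH =>
    intro x y hx hy hxy hcard z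
    obtain ⟨m, hmM, hcov, hmy⟩ := exists_cover_in_M hM hx hy hxy
    rcases eq_or_lt_of_le hmy with rfl | hmy'
    · exact rm_cover hB hx hy hcov z
    · have hcard' : (Finset.univ.filter (fun t : L => m < t ∧ t ≤ y)).card ≤ n := by
        have hsub : (Finset.univ.filter (fun t : L => m < t ∧ t ≤ y)) ⊆
            (Finset.univ.filter (fun t : L => x < t ∧ t ≤ y)).erase m := by
          intro t ht
          simp only [Finset.mem_filter, Finset.mem_univ, true_and] at ht
          refine Finset.mem_erase.2 ⟨ht.1.ne', ?_⟩
          simp only [Finset.mem_filter, Finset.mem_univ, true_and]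
          exact ⟨hcov.lt.trans ht.1, ht.2⟩
        have hmem : m ∈ Finset.univ.filter (fun t : L => x < t ∧ t ≤ y) := by
          simp [hcov.lt, hmy]
        have := Finset.card_le_card hsub
        rw [Finset.card_erase_of_mem hmem] at this
        omega
      have hIH : ∀ w : L, m ⊔ (w ⊓ y) = (m ⊔ w) ⊓ y := fun w =>
        IH m y hmM hy hmy' hcard' w
      set u := x ⊔ (z ⊓ y) with hu
      set v := (x ⊔ z) ⊓ y with hv
      have huv : u ≤ v := sup_le (le_inf le_sup_left hxy.le)
        (le_inf (inf_le_left.trans le_sup_right) inf_le_right)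
      have hvmu : v ⊓ m ≤ u := by
        have h1 : v ⊓ m = (x ⊔ z) ⊓ m := by
          rw [hv, inf_assoc, inf_eq_right.2 hmy]
        have h2 : (x ⊔ z) ⊓ m = x ⊔ (z ⊓ m) := (rm_cover hB hx hmM hcov z).symm
        rw [h1, h2]
        exact sup_le le_sup_left ((inf_le_inf_left z hmy).trans le_sup_right)
      have hvmu2 : v ≤ m ⊔ u := by
        have h1 : v ≤ (m ⊔ z) ⊓ y := inf_le_inf (sup_le_sup_right hcov.lt.le z) le_rfl
        rw [← hIH z] at h1
        exact h1.trans (sup_le_sup_left le_sup_right m)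
      have lm := lm_le (hLM m hmM) huv
      have h3 : u ⊔ (m ⊓ v) = u := sup_eq_left.2 (inf_comm m v ▸ hvmu)
      have h4 : (u ⊔ m) ⊓ v = v := inf_eq_right.2 (sup_comm m u ▸ hvmu2)
      rw [h3, h4] at lm
      exact lm

end ChiefAux


/-- A maximal chain `M` of a finite lattice `L` is a chief chain if and only if (a) no
element of `M` is the short side of a pentagon sublattice of `L`, and (b) no cover
relation of `M` is the long side of a pentagon sublattice of `L`. -/
theorem chiefChain_iff_no_pentagons {L : Type*} [Lattice L] [Fintype L]
    (M : Set L) (hM : IsMaxChain (· ≤ ·) M) :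
    IsChiefChain M ↔
      (∀ m ∈ M, ¬ ∃ x y : L, x < y ∧ (¬ m ≤ x ∧ ¬ x ≤ m) ∧ (¬ m ≤ y ∧ ¬ y ≤ m) ∧
          m ⊓ x = m ⊓ y ∧ m ⊔ x = m ⊔ y) ∧
        (∀ m ∈ M, ∀ m' ∈ M, m ⋖ m' → ¬ ∃ z : L, (¬ z ≤ m ∧ ¬ m ≤ z) ∧
          (¬ z ≤ m' ∧ ¬ m' ≤ z) ∧ z ⊓ m = z ⊓ m' ∧ z ⊔ m = z ⊔ m') := by
  constructor
  · -- forward direction: a chief chain has no such pentagons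
    intro hChief
    constructor
    · rintro m hm ⟨x, y, hxy, ⟨hmx, hxm⟩, ⟨hmy, hym⟩, hinf, hsup⟩
      have hCchain : IsChain (· ≤ ·) ({x, y} : Set L) := by
        intro a ha b hb hne
        rcases ha with rfl | ha <;> rcases hb with rfl | hb
        · exact absurd rfl hne
        · rw [Set.mem_singleton_iff] at hb; subst hb; exact Or.inl hxy.le
        · rw [Set.mem_singleton_iff] at ha; subst ha; exact Or.inr hxy.le
        · rw [Set.mem_singleton_iff] at ha hb; subst ha; subst hb; exact absurd rfl hne
      have hmK : m ∈ latticeClosure (M ∪ {x, y}) :=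
        subset_latticeClosure (Or.inl hm)
      have hxK : x ∈ latticeClosure (M ∪ {x, y}) :=
        subset_latticeClosure (Or.inr (by simp))
      have hyK : y ∈ latticeClosure (M ∪ {x, y}) :=
        subset_latticeClosure (Or.inr (by simp))
      have h := hChief {x, y} hCchain y hyK x hxK m hmK
      have h1 : y ⊓ (x ⊔ m) = y := by
        refine inf_eq_left.2 ?_
        rw [sup_comm x m, hsup]
        exact le_sup_right
      have h2 : y ⊓ x = x := inf_eq_right.2 hxy.le
      have h3 : y ⊓ m ≤ x := by
        rw [inf_comm y m, ← hinf]
        exact inf_le_right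
      rw [h1, h2, sup_eq_left.2 h3] at h
      exact absurd h hxy.ne'
    · rintro m hm m' hm' hcov ⟨z, ⟨hzm, hmz⟩, ⟨hzm', hm'z⟩, hinf, hsup⟩
      have hCchain : IsChain (· ≤ ·) ({z} : Set L) := by
        intro a ha b hb hne
        rw [Set.mem_singleton_iff] at ha hb
        subst ha; subst hb; exact absurd rfl hne
      have hmK : m ∈ latticeClosure (M ∪ {z}) := subset_latticeClosure (Or.inl hm)
      have hm'K : m' ∈ latticeClosure (M ∪ {z}) := subset_latticeClosure (Or.inl hm')
      have hzK : z ∈ latticeClosure (M ∪ {z}) := subset_latticeClosure (Or.inr rfl)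
      have h := hChief {z} hCchain m' hm'K m hmK z hzK
      have h1 : m' ⊓ (m ⊔ z) = m' := by
        refine inf_eq_left.2 ?_
        rw [sup_comm m z, hsup]
        exact le_sup_right
      have h2 : m' ⊓ m = m := inf_eq_right.2 hcov.lt.le
      have h3 : m' ⊓ z ≤ m := by
        rw [inf_comm m' z, ← hinf]
        exact inf_le_right
      rw [h1, h2, sup_eq_left.2 h3] at h
      exact absurd h hcov.lt.ne'
  · -- backward direction
    rintro ⟨hA, hB⟩
    intro C hC a ha b hb c hc
    cases isEmpty_or_nonempty L with
    | inl h => exact isEmptyElim a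
    | inr hne =>
      classical
      set bot : L := Finset.univ.inf' Finset.univ_nonempty id with hbotdef
      set top : L := Finset.univ.sup' Finset.univ_nonempty id with htopdef
      have hbot : ∀ x : L, bot ≤ x := fun x => Finset.inf'_le id (Finset.mem_univ x)
      have htop : ∀ x : L, x ≤ top := fun x => Finset.le_sup' id (Finset.mem_univ x)
      have hMc : IsChain (· ≤ ·) M := hM.1
      have hbotM : bot ∈ M := by
        have hch : IsChain (· ≤ ·) (insert bot M) :=
          hMc.insert fun t _ _ => Or.inl (hbot t)
        have := hM.2 hch (Set.subset_insert bot M)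
        rw [this]; exact Set.mem_insert bot M
      have htopM : top ∈ M := by
        have hch : IsChain (· ≤ ·) (insert top M) :=
          hMc.insert fun t _ _ => Or.inr (htop t)
        have := hM.2 hch (Set.subset_insert top M)
        rw [this]; exact Set.mem_insert top M
      have hLM := ChiefAux.leftModular_of_condA hA
      have hRM := ChiefAux.rm_of_conds hM hB hLM
      obtain ⟨cs, hasc, hcs⟩ := ChiefAux.exists_ascending_list (Set.toFinite C).toFinset
        (by
          intro x hx y hy
          rw [Set.Finite.mem_toFinset] at hx hy
          rcases eq_or_ne x y with rfl | hne'
          · exact Or.inl le_rfl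
          · exact hC.total hx hy)
      have hMD : M ⊆ {x | ChiefAux.ValidRep M cs x} := fun m hm =>
        ChiefAux.validRep_of_mem_M hm
      have hCD : C ⊆ {x | ChiefAux.ValidRep M cs x} := fun c hc =>
        ChiefAux.validRep_of_mem_cs hbotM htopM hbot htop cs hasc c
          ((hcs c).1 ((Set.Finite.mem_toFinset _).2 hc))
      have hsubl : IsSublattice {x | ChiefAux.ValidRep M cs x} := by
        constructor
        · intro x hx y hy
          exact ChiefAux.validRep_sup hMc hx hy
        · intro x hx y hy
          exact ChiefAux.validRep_inf hMc hRM hLM hbot hasc hx hy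
      have hKD := latticeClosure_min (Set.union_subset hMD hCD) hsubl
      exact ChiefAux.validRep_distrib hMc hRM hLM hbot hasc (hKD ha) (hKD hb) (hKD hc)
end

section
/- If M is a chief chain of a finite lattice L, then every element of M is left-modular and M is right chain-modular. -/
/-- If `M` is a chief chain of a finite lattice `L`, then every element of `M` is
left-modular and `M` is right chain-modular. -/
theorem chiefChain_chainModular {L : Type*} [Lattice L] [Fintype L]
    (M : Set L) (hM : IsMaxChain (· ≤ ·) M) (h : IsChiefChain M) :
    (∀ m ∈ M, IsLeftModular m) ∧ IsRightChainModular M := by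
  constructor
  · intro m hm x y hxy
    have hC : IsChain (· ≤ ·) ({x, y} : Set L) := by
      intro a ha b hb _
      rcases ha with rfl | ha <;> rcases hb with rfl | hb
      · exact Or.inl le_rfl
      · exact Or.inl (hb ▸ hxy.le)
      · exact Or.inr (ha ▸ hxy.le)
      · exact Or.inl (ha ▸ hb ▸ le_rfl)
    have hmem : ∀ a ∈ M ∪ ({x, y} : Set L), a ∈ latticeClosure (M ∪ {x, y}) :=
      fun a ha => subset_latticeClosure ha
    have hy : y ∈ latticeClosure (M ∪ ({x, y} : Set L)) :=
      hmem y (Or.inr (Or.inr rfl))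
    have hx : x ∈ latticeClosure (M ∪ ({x, y} : Set L)) :=
      hmem x (Or.inr (Or.inl rfl))
    have hm' : m ∈ latticeClosure (M ∪ ({x, y} : Set L)) := hmem m (Or.inl hm)
    have := h {x, y} hC y hy x hx m hm'
    rw [inf_eq_right.mpr hxy.le, inf_comm] at this
    rw [this, inf_comm]
  · intro x hx y hy hxy z
    have hC : IsChain (· ≤ ·) ({z} : Set L) := Set.Subsingleton.isChain
      (Set.subsingleton_singleton)
    have hmem : ∀ a ∈ M ∪ ({z} : Set L), a ∈ latticeClosure (M ∪ {z}) :=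
      fun a ha => subset_latticeClosure ha
    have := h {z} hC y (hmem y (Or.inl hy)) x (hmem x (Or.inl hx)) z
      (hmem z (Or.inr rfl))
    rw [inf_eq_right.mpr hxy.le, inf_comm] at this
    rw [this, inf_comm]
end
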